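/- Let α^d_{d-t+1} be the matrix of the map α_{d-t+1}: C_{d-t+1}(x,1^d) → C_{d-t+1}(-x-2d,1^d) with respect to the reverse-lexicographic basis order. Then α^d_{d-t+1} has block form [[(-1)^d · Id_{binom(d-1,t-2)}, γ], [0, α^{d-1}_{d-t}]], where the blocks are indexed by whether the composition has last part λ_t = 0 or λ_t ≥ 1, and the lower-right block equals the matrix α^{d-1}_{d-t} for parameter d-1 (via (λ_t,…,λ_1) ↦ (λ_t - 1, λ_{t-1},…,λ_1)). In particular det(α^d_{d-t+1}) = ±1. -/

import Mathlib

open Finset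

/-- Generalized binomial coefficient `binom(a, b)` for integers `a, b`:
`a(a-1)⋯(a-b+1)/b!` when `b ≥ 0`, and `0` when `b < 0`. -/
noncomputable def zbinom (a b : ℤ) : ℤ := if 0 ≤ b then Ring.choose a b.toNat else 0

/-- `S(s) = ∑_{m=1}^{s} (μ_m + λ_m)`. -/
def Sfun (lam mu : ℕ → ℕ) (s : ℕ) : ℤ := ∑ m ∈ Finset.Icc 1 s, ((mu m : ℤ) + (lam m : ℤ))

/-- `A_k(λ,μ) = ∏_{s=0}^{k-2} binom(S(s)+μ_{s+1}+2s, S(s)+λ_{s+1}+2s)`. -/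
noncomputable def Afun (lam mu : ℕ → ℕ) (k : ℕ) : ℤ :=
  ∏ s ∈ Finset.range (k - 1),
    zbinom (Sfun lam mu s + (mu (s+1) : ℤ) + 2 * s) (Sfun lam mu s + (lam (s+1) : ℤ) + 2 * s)

/-- `B_k(λ,μ) = ∏_{s=k+1}^{t-1} binom(S(s-1)+μ_s+μ_{s+1}+2s-1, S(s)+2s-1)`. -/
noncomputable def Bfun (t : ℕ) (lam mu : ℕ → ℕ) (k : ℕ) : ℤ :=
  ∏ s ∈ Finset.Icc (k + 1) (t - 1),
    zbinom (Sfun lam mu (s - 1) + (mu s : ℤ) + (mu (s+1) : ℤ) + 2 * s - 1)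
      (Sfun lam mu s + 2 * s - 1)

/-- `g_k(λ,μ;z) = binom(S(k-1)+μ_k+2(k-1), S(k-1)+λ_k-z+2(k-1))`. -/
noncomputable def gfun (lam mu : ℕ → ℕ) (k : ℕ) (z : ℤ) : ℤ :=
  zbinom (Sfun lam mu (k - 1) + (mu k : ℤ) + 2 * ((k : ℤ) - 1))
    (Sfun lam mu (k - 1) + (lam k : ℤ) - z + 2 * ((k : ℤ) - 1))

/-- `h_k(λ,μ;z) = binom(S(k)+μ_{k+1}-z+2(k-1)+2, S(k)+2(k-1)+1)`. -/
noncomputable def hfun (lam mu : ℕ → ℕ) (k : ℕ) (z : ℤ) : ℤ :=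
  zbinom (Sfun lam mu k + (mu (k+1) : ℤ) - z + 2 * ((k : ℤ) - 1) + 2)
    (Sfun lam mu k + 2 * ((k : ℤ) - 1) + 1)

/-- Reindexing of a tuple `f : Fin n → ℕ` (with `f ⟨m-1⟩` giving the part with subscript
`m`) as a function `ℕ → ℕ` supported on `{1, …, n}`. -/
def toFun (n : ℕ) (f : Fin n → ℕ) : ℕ → ℕ :=
  fun m => if h : 1 ≤ m ∧ m ≤ n then f ⟨m - 1, by omega⟩ else 0

/-- The weak composition `(λ_t, …, λ_{j+1}, i-1, λ_j - i, λ_{j-1}, …, λ_1)` (with `t+1`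
parts, subscripts `1, …, t+1`) obtained from `λ = (λ_t, …, λ_1)` by splitting the `j`-th
interval at its `i`-th edge. -/
def split (lam : ℕ → ℕ) (j i : ℕ) : ℕ → ℕ := fun m =>
  if m < j then lam m else if m = j then lam j - i else if m = j + 1 then i - 1 else lam (m - 1)

/-- The coefficient of `f_ν` in `∂(f_λ)`, for the arithmetic complex `C_•(w_0, 1^d)` with
`w_0 = x`: the differential is
`∂(f_{(λ_t,…,λ_1)}) = ∑_{j=1}^{t} ∑_{i=1}^{λ_j} (-1)^{t-j} binom(ω(I_{λ_j}), ω(I_{λ_j}∖{i}))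
f_{(λ_t,…,λ_{j+1},i-1,λ_j-i,λ_{j-1},…,λ_1)}`,
where `λ` has `t` parts, `ω(I_{λ_j}) = λ_j + 1` for `j < t` and `x + λ_t` for `j = t`
(the leftmost interval contains the vertex of weight `w_0 = x`), and
`ω(I_{λ_j}∖{i}) = λ_j - i + 1`. -/
noncomputable def Dmat (x : ℤ) (t : ℕ) (nu lam : ℕ → ℕ) : ℤ :=
  ∑ j ∈ Finset.Icc 1 t, ∑ i ∈ Finset.Icc 1 (lam j),
    if ∀ m ∈ Finset.Icc 1 (t + 1), nu m = split lam j i m then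
      (-1 : ℤ) ^ (t - j) *
        (if j = t then zbinom (x + (lam t : ℤ)) ((lam t : ℤ) - i + 1)
          else zbinom ((lam j : ℤ) + 1) ((lam j : ℤ) - i + 1))
    else 0

/-- The coefficient of `f_μ` in `α(f_λ)`, for weak compositions `λ, μ` with `t` parts:
`(-1)^{d-μ_t} ∏_{s=0}^{t-2} binom(∑_{j≤s}(λ_j+μ_j)+μ_{s+1}+2s, ∑_{j≤s}(λ_j+μ_j)+λ_{s+1}+2s)`. -/
noncomputable def Amat (d t : ℕ) (lam mu : ℕ → ℕ) : ℤ :=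
  (-1 : ℤ) ^ (d - mu t) * Afun lam mu t

/-!
Every factor of `Afun λ μ t` is a binomial coefficient `binom(S + μ_j + c, S + λ_j + c)` with
`j < t` and a nonnegative top entry, so it equals `1` when `λ_j = μ_j` and `0` when `μ_j < λ_j`.
Two distinct compositions of the same number with `λ_t ≤ μ_t` must have `μ_j < λ_j` for some
`j < t`, so `Amat` vanishes there. Ordered by decreasing last part, the matrix is therefore
triangular with diagonal entries `±1`, and the last part only enters the sign `(-1)^(d - μ_t)`.
-/

lemma Finset.exists_ne_lt_of_sum_eq {ι M : Type*} [AddCommMonoid M] [LinearOrder M]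
    [IsOrderedCancelAddMonoid M] {s : Finset ι} {f g : ι → M}
    (hsum : ∑ i ∈ s, f i = ∑ i ∈ s, g i) (hne : ¬ ∀ i ∈ s, f i = g i)
    {k : ι} (hfg : f k ≤ g k) : ∃ j ∈ s, j ≠ k ∧ g j < f j := by
  by_contra! h
  have hle : ∀ i ∈ s, f i ≤ g i := fun i hi => by
    by_cases hik : i = k
    · exact hik ▸ hfg
    · exact h i hi hik
  exact hne ((sum_eq_sum_iff_of_le hle).1 hsum)

lemma Matrix.det_eq_prod_diag_of_forall_le {ι R α : Type*} [Fintype ι] [DecidableEq ι]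
    [CommRing R] [LinearOrder α] (M : Matrix ι ι R) (f : ι → α)
    (hM : ∀ i j, i ≠ j → f i ≤ f j → M i j = 0) : M.det = ∏ i, M i i := by
  let key : ι → αᵒᵈ ×ₗ Fin (Fintype.card ι) := fun i =>
    toLex (OrderDual.toDual (f i), Fintype.equivFin ι i)
  let _ : LinearOrder ι := LinearOrder.lift' key
    (fun i j hij => (Fintype.equivFin ι).injective (congrArg (fun p => (ofLex p).2) hij))
  refine Matrix.det_of_isUpperTriangular fun i j hji => hM i j ?_ ?_
  all_goals replace hji : key j < key i := hji
  · rintro rfl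
    exact lt_irrefl _ hji
  · rcases Prod.Lex.lt_iff.1 hji with hlt | ⟨heq, -⟩
    · exact (OrderDual.toDual_lt_toDual.1 hlt).le
    · exact (OrderDual.toDual_inj.1 heq).ge

lemma zbinom_natCast (n k : ℕ) : zbinom n k = n.choose k := by
  simp [zbinom, Ring.choose_natCast]

lemma zbinom_self {a : ℤ} (ha : 0 ≤ a) : zbinom a a = 1 := by
  lift a to ℕ using ha
  simp [zbinom_natCast]

lemma zbinom_eq_zero_of_lt {a b : ℤ} (ha : 0 ≤ a) (hab : a < b) : zbinom a b = 0 := by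
  lift a to ℕ using ha
  lift b to ℕ using by omega
  rw [zbinom_natCast, Nat.choose_eq_zero_of_lt (by omega), Nat.cast_zero]

lemma Sfun_nonneg (lam mu : ℕ → ℕ) (s : ℕ) : 0 ≤ Sfun lam mu s :=
  sum_nonneg fun _ _ => by positivity

lemma Sfun_congr {lam mu lam' mu' : ℕ → ℕ} {s : ℕ}
    (hlam : ∀ j ∈ Icc 1 s, lam j = lam' j) (hmu : ∀ j ∈ Icc 1 s, mu j = mu' j) :
    Sfun lam mu s = Sfun lam' mu' s :=
  sum_congr rfl fun j hj => by rw [hlam j hj, hmu j hj]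

lemma Afun_congr {lam mu lam' mu' : ℕ → ℕ} {t : ℕ}
    (hlam : ∀ j ∈ Ico 1 t, lam j = lam' j) (hmu : ∀ j ∈ Ico 1 t, mu j = mu' j) :
    Afun lam mu t = Afun lam' mu' t := by
  refine prod_congr rfl fun s hs => ?_
  have hs : s + 1 < t := by rw [mem_range] at hs; omega
  have hIcc : ∀ j ∈ Icc 1 s, j ∈ Ico 1 t := fun j hj => by
    rw [mem_Icc] at hj
    exact mem_Ico.2 ⟨hj.1, by omega⟩
  have hsucc : s + 1 ∈ Ico 1 t := mem_Ico.2 ⟨by omega, hs⟩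
  rw [Sfun_congr (fun j hj => hlam j (hIcc j hj)) (fun j hj => hmu j (hIcc j hj)),
    hlam _ hsucc, hmu _ hsucc]

lemma Afun_self (lam : ℕ → ℕ) (t : ℕ) : Afun lam lam t = 1 :=
  prod_eq_one fun s _ => zbinom_self (by have := Sfun_nonneg lam lam s; positivity)

lemma Afun_eq_zero_of_lt {lam mu : ℕ → ℕ} {t j : ℕ} (hj : j ∈ Ico 1 t) (hlt : mu j < lam j) :
    Afun lam mu t = 0 := by
  rw [mem_Ico] at hj
  refine prod_eq_zero (i := j - 1) (mem_range.2 (by omega)) ?_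
  rw [Nat.sub_add_cancel hj.1]
  have := Sfun_nonneg lam mu (j - 1)
  exact zbinom_eq_zero_of_lt (by positivity) (by omega)

lemma Afun_eq_zero_of_sum_eq {lam mu : ℕ → ℕ} {t : ℕ}
    (hsum : ∑ m ∈ Icc 1 t, (lam m : ℤ) = ∑ m ∈ Icc 1 t, (mu m : ℤ))
    (hne : ¬ ∀ j ∈ Icc 1 t, lam j = mu j) (hle : lam t ≤ mu t) : Afun lam mu t = 0 := by
  obtain ⟨j, hj, hjt, hlt⟩ := exists_ne_lt_of_sum_eq hsum (by exact_mod_cast hne)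
    (k := t) (by exact_mod_cast hle)
  rw [mem_Icc] at hj
  exact Afun_eq_zero_of_lt (mem_Ico.2 ⟨hj.1, by omega⟩) (by exact_mod_cast hlt)

lemma Amat_of_eqOn {d t : ℕ} {lam mu : ℕ → ℕ} (h : ∀ j ∈ Ico 1 t, lam j = mu j) :
    Amat d t lam mu = (-1) ^ (d - mu t) := by
  rw [Amat, Afun_congr h (fun _ _ => rfl), Afun_self, mul_one]

lemma Amat_eq_zero_of_sum_eq {d t : ℕ} {lam mu : ℕ → ℕ}
    (hsum : ∑ m ∈ Icc 1 t, (lam m : ℤ) = ∑ m ∈ Icc 1 t, (mu m : ℤ))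
    (hne : ¬ ∀ j ∈ Icc 1 t, lam j = mu j) (hle : lam t ≤ mu t) : Amat d t lam mu = 0 := by
  rw [Amat, Afun_eq_zero_of_sum_eq hsum hne hle, mul_zero]

lemma Amat_eq_Amat_pred_last (d t : ℕ) {lam mu : ℕ → ℕ} (hmu : 1 ≤ mu t) :
    Amat d t lam mu =
      Amat (d - 1) t (fun m => if m = t then lam t - 1 else lam m)
        (fun m => if m = t then mu t - 1 else mu m) := by
  have hoff : ∀ f : ℕ → ℕ, ∀ j ∈ Ico 1 t, f j = if j = t then f t - 1 else f j :=
    fun f j hj => (if_neg (mem_Ico.1 hj).2.ne).symm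
  rw [Amat, Amat, Afun_congr (hoff lam) (hoff mu), if_pos rfl]
  congr 2
  omega

lemma toFun_one_add {n : ℕ} (f : Fin n → ℕ) (k : Fin n) : toFun n f (1 + k) = f k := by
  rw [toFun, dif_pos ⟨by omega, by omega⟩]
  congr 1
  ext
  simp

lemma sum_toFun {n : ℕ} (f : Fin n → ℕ) :
    ∑ m ∈ Icc 1 n, (toFun n f m : ℤ) = ∑ k, (f k : ℤ) := by
  rw [← Ico_add_one_right_eq_Icc, sum_Ico_eq_sum_range, Nat.add_sub_cancel,
    ← Fin.sum_univ_eq_sum_range (fun k => (toFun n f (1 + k) : ℤ))]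
  simp only [toFun_one_add]

lemma eq_of_toFun_eqOn {n : ℕ} {f g : Fin n → ℕ}
    (h : ∀ m ∈ Icc 1 n, toFun n f m = toFun n g m) : f = g := by
  funext k
  simpa only [toFun_one_add] using h (1 + k) (mem_Icc.2 ⟨by omega, by omega⟩)

lemma sum_toFun_of_mem_antidiagonalTuple {n N : ℕ} (a : {a // a ∈ Nat.antidiagonalTuple n N}) :
    ∑ m ∈ Icc 1 n, (toFun n a.1 m : ℤ) = N := by
  rw [sum_toFun]
  exact_mod_cast Nat.mem_antidiagonalTuple.1 a.2

lemma det_Amat_antidiagonalTuple (d t N : ℕ) :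
    (Matrix.of fun lam mu : {a // a ∈ Nat.antidiagonalTuple t N} =>
        Amat d t (toFun t lam.1) (toFun t mu.1)).det =
      (-1) ^ ∑ lam : {a // a ∈ Nat.antidiagonalTuple t N}, (d - toFun t lam.1 t) := by
  refine (Matrix.det_eq_prod_diag_of_forall_le _ (fun a => toFun t a.1 t)
    fun a b hab hle => ?_).trans ?_
  · exact Amat_eq_zero_of_sum_eq ((sum_toFun_of_mem_antidiagonalTuple a).trans
      (sum_toFun_of_mem_antidiagonalTuple b).symm)
      (fun h => hab (Subtype.ext (eq_of_toFun_eqOn h))) hle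
  · simp only [Matrix.of_apply, Amat_of_eqOn fun _ _ => rfl, prod_pow_eq_pow_sum]

theorem stmt16_general (d t : ℕ) (ht : 1 ≤ t) :
    (∀ lam mu : ℕ → ℕ,
      (∑ m ∈ Finset.Icc 1 t, (lam m : ℤ)) = (d : ℤ) - t + 1 →
      (∑ m ∈ Finset.Icc 1 t, (mu m : ℤ)) = (d : ℤ) - t + 1 →
      -- upper-left block: `(-1)^d` times the identity
      (lam t = 0 → mu t = 0 →
        Amat d t lam mu =
          if ∀ j ∈ Finset.Icc 1 t, lam j = mu j then (-1 : ℤ) ^ d else 0) ∧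
      -- lower-left block: zero
      (lam t = 0 → 1 ≤ mu t → Amat d t lam mu = 0) ∧
      -- lower-right block: the matrix `α^{d-1}_{d-t}`
      (1 ≤ lam t → 1 ≤ mu t →
        Amat d t lam mu =
          Amat (d - 1) t (fun m => if m = t then lam t - 1 else lam m)
            (fun m => if m = t then mu t - 1 else mu m))) ∧
    ((Matrix.of
        (fun lam mu : {a // a ∈ Finset.Nat.antidiagonalTuple t (d + 1 - t)} =>
          Amat d t (toFun t lam.1) (toFun t mu.1))).det = 1 ∨
      (Matrix.of
        (fun lam mu : {a // a ∈ Finset.Nat.antidiagonalTuple t (d + 1 - t)} =>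
          Amat d t (toFun t lam.1) (toFun t mu.1))).det = -1) := by
  refine ⟨fun lam mu hlam hmu => ⟨fun hl hm => ?_, fun hl hm => ?_, fun _ hm => ?_⟩, ?_⟩
  · split_ifs with heq
    · rw [Amat_of_eqOn fun j hj => heq j (Ico_subset_Icc_self hj), hm, Nat.sub_zero]
    · exact Amat_eq_zero_of_sum_eq (hlam.trans hmu.symm) heq (by omega)
  · refine Amat_eq_zero_of_sum_eq (hlam.trans hmu.symm) (fun heq => ?_) (by omega)
    have := heq t (right_mem_Icc.2 ht)
    omega
  · exact Amat_eq_Amat_pred_last d t hm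
  · rw [det_Amat_antidiagonalTuple]
    exact neg_one_pow_eq_or ℤ _

/-- Corollary 3.5: with respect to the reverse-lexicographic basis order, the matrix
`α^d_{d-t+1}` has block form `[[(-1)^d · Id, γ], [0, α^{d-1}_{d-t}]]`, where the blocks are
indexed by whether the last part is `0` or `≥ 1`, the lower-right block being the matrix
for parameter `d-1` via `(λ_t, …, λ_1) ↦ (λ_t - 1, λ_{t-1}, …, λ_1)`. In particular
`det(α^d_{d-t+1}) = ±1`. -/
theorem stmt16 (d t : ℕ) (hd : 1 ≤ d) (ht : 1 ≤ t) (htd : t ≤ d + 1) :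
    (∀ lam mu : ℕ → ℕ,
      (∑ m ∈ Finset.Icc 1 t, (lam m : ℤ)) = (d : ℤ) - t + 1 →
      (∑ m ∈ Finset.Icc 1 t, (mu m : ℤ)) = (d : ℤ) - t + 1 →
      -- upper-left block: `(-1)^d` times the identity
      (lam t = 0 → mu t = 0 →
        Amat d t lam mu =
          if ∀ j ∈ Finset.Icc 1 t, lam j = mu j then (-1 : ℤ) ^ d else 0) ∧
      -- lower-left block: zero
      (lam t = 0 → 1 ≤ mu t → Amat d t lam mu = 0) ∧
      -- lower-right block: the matrix `α^{d-1}_{d-t}`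
      (1 ≤ lam t → 1 ≤ mu t →
        Amat d t lam mu =
          Amat (d - 1) t (fun m => if m = t then lam t - 1 else lam m)
            (fun m => if m = t then mu t - 1 else mu m))) ∧
    ((Matrix.of
        (fun lam mu : {a // a ∈ Finset.Nat.antidiagonalTuple t (d + 1 - t)} =>
          Amat d t (toFun t lam.1) (toFun t mu.1))).det = 1 ∨
      (Matrix.of
        (fun lam mu : {a // a ∈ Finset.Nat.antidiagonalTuple t (d + 1 - t)} =>
          Amat d t (toFun t lam.1) (toFun t mu.1))).det = -1) :=
  stmt16_general d t ht
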